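/- Exchange of substitutions: let 𝐮 ∈ Sp γ₁ γ₂ and 𝐭 ∈ Sp γ₁.γ₂ γ₃. For every expression e ∈ Expr γ₁.γ₂.γ₃.γ₄ we have e[𝐭/γ₃][𝐮/γ₂] = e[𝐮/γ₂][𝐭[𝐮/γ₂]/γ₃]. -/

import Mathlib

set_option autoImplicit true

namespace CompLF

/-! ## Raw syntax: scopes, pre-signatures, terms and spines -/

/-! Scopes `γ`: lists of entries `x :: δ → s` (nameless, de Bruijn). -/
inductive Scope : Type
  | nil : Scope
  | snoc : Scope → Scope → ℕ → Scope

def Scope.len : Scope → ℕ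
  | .nil => 0
  | .snoc γ _ _ => γ.len + 1

def Scope.append : Scope → Scope → Scope
  | γ, .nil => γ
  | γ, .snoc δ a s => .snoc (γ.append δ) a s

/-- Lookup in a scope: de Bruijn index `0` is the last entry. -/
inductive ScopeAt : Scope → ℕ → Scope → ℕ → Prop
  | here : ScopeAt (.snoc γ δ s) 0 δ s
  | there : ScopeAt γ n δ s → ScopeAt (.snoc γ δ' s') (n+1) δ s

/-- Entries of a pre-signature: `c :: δ → s` (term-level, `out = some s`) or
`c :: δ → □` (type-level, `out = none`). -/
structure PEntry : Type where
  c : ℕ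
  δ : Scope
  out : Option ℕ

abbrev PreSig := List PEntry

/-! Canonical terms and spines (raw, de Bruijn): a term is a head (variable or
constant) applied to a spine; a spine element `x⃗.t` binds `n` variables. -/
mutual
inductive Tm : Type
  | head : (ℕ ⊕ ℕ) → Sp → Tm
inductive Sp : Type
  | nil : Sp
  | snoc : Sp → ℕ → Tm → Sp
end

def Sp.len : Sp → ℕ
  | .nil => 0
  | .snoc ts _ _ => ts.len + 1

def Sp.append : Sp → Sp → Sp
  | a, .nil => a
  | a, .snoc b n t => .snoc (a.append b) n t

/-! Shifting of de Bruijn indices `≥ k` by `d`. -/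
mutual
def shiftTm (d k : ℕ) : Tm → Tm
  | .head (.inl x) sp => .head (.inl (if x < k then x else x + d)) (shiftSp d k sp)
  | .head (.inr c) sp => .head (.inr c) (shiftSp d k sp)
def shiftSp (d k : ℕ) : Sp → Sp
  | .nil => .nil
  | .snoc ts n t => .snoc (shiftSp d k ts) n (shiftTm d (k + n) t)
end

/-! Intrinsic scoping/sorting of terms and spines over a pre-signature. -/
mutual
inductive WfTm (ς : PreSig) : Scope → Tm → ℕ → Prop
  | var : ScopeAt γ x δ s → WfSp ς γ ts δ → WfTm ς γ (.head (.inl x) ts) s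
  | const : (⟨c, δ, some s⟩ : PEntry) ∈ ς → WfSp ς γ ts δ →
      WfTm ς γ (.head (.inr c) ts) s
inductive WfSp (ς : PreSig) : Scope → Sp → Scope → Prop
  | nil : WfSp ς γ .nil .nil
  | snoc : WfSp ς γ ts δ → WfTm ς (γ.append γ') t s →
      WfSp ς γ (.snoc ts γ'.len t) (.snoc δ γ' s)
end

/-! Lookup of an argument in a spine (index `0` = last element), returning its
number of bound variables and its body. -/
inductive SpAt : Sp → ℕ → ℕ → Tm → Prop
  | here : SpAt (.snoc ts n t) 0 n t
  | there : SpAt ts j n t → SpAt (.snoc ts n' t') (j+1) n t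

/-! ## Hereditary substitution -/

/-! Hereditary substitution `e[𝐮/γ₂]` of a spine `u` for the `m` variables of a
scope segment located under `k` binders; variables above the segment are
shifted down by `m`.  `SubTm k m u t t'` means `t' = t[u]`. -/
mutual
inductive SubTm : ℕ → ℕ → Sp → Tm → Tm → Prop
  | low : x < k → SubSp k m u sp sp' →
      SubTm k m u (.head (.inl x) sp) (.head (.inl x) sp')
  | high : k + m ≤ x → SubSp k m u sp sp' →
      SubTm k m u (.head (.inl x) sp) (.head (.inl (x - m)) sp')
  | const : SubSp k m u sp sp' →
      SubTm k m u (.head (.inr c) sp) (.head (.inr c) sp')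
  | mid : k ≤ x → x < k + m → SpAt u (x - k) n t → SubSp k m u sp sp' →
      SubTm 0 n sp' (shiftTm k n t) r →
      SubTm k m u (.head (.inl x) sp) r
inductive SubSp : ℕ → ℕ → Sp → Sp → Sp → Prop
  | nil : SubSp k m u .nil .nil
  | snoc : SubSp k m u ts ts' → SubTm (k + n) m u t t' →
      SubSp k m u (.snoc ts n t) (.snoc ts' n t')
end

/-! ## Types and contexts -/

/-! Types `c(𝐭)` with `c` a type-level constant. -/
structure Ty : Type where
  c : ℕ
  sp : Sp

/-- Contexts: lists of entries `x : Δ → T`. -/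
inductive Ctx : Type
  | nil : Ctx
  | snoc : Ctx → Ctx → Ty → Ctx

/-- Number of entries of a context (= length of its erased scope). -/
def Ctx.size : Ctx → ℕ
  | .nil => 0
  | .snoc Γ _ _ => Γ.size + 1

def Ctx.append : Ctx → Ctx → Ctx
  | Γ, .nil => Γ
  | Γ, .snoc Δ A T => .snoc (Γ.append Δ) A T

/-- Erasure of a type into a sort, via a fixed injection `csort` from
(type-level) constants to sorts. -/
def eraseTy (csort : ℕ → ℕ) (T : Ty) : ℕ := csort T.c

/-- Erasure of a context into a scope. -/
def eraseCtx (csort : ℕ → ℕ) : Ctx → Scope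
  | .nil => .nil
  | .snoc Γ Δ T => .snoc (eraseCtx csort Γ) (eraseCtx csort Δ) (csort T.c)

def shiftTy (d k : ℕ) (T : Ty) : Ty := ⟨T.c, shiftSp d k T.sp⟩

def shiftCtx (d : ℕ) : ℕ → Ctx → Ctx
  | _, .nil => .nil
  | k, .snoc Γ Δ T =>
      .snoc (shiftCtx d k Γ) (shiftCtx d (k + Γ.size) Δ)
        (shiftTy d (k + Γ.size + Δ.size) T)

/-- Substitution on types. -/
inductive SubTy (k m : ℕ) (u : Sp) : Ty → Ty → Prop
  | mk : SubSp k m u sp sp' → SubTy k m u ⟨c, sp⟩ ⟨c, sp'⟩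

/-- Substitution on contexts. -/
inductive SubCtx : ℕ → ℕ → Sp → Ctx → Ctx → Prop
  | nil : SubCtx k m u .nil .nil
  | snoc : SubCtx k m u Γ Γ' → SubCtx (k + Γ.size) m u Δ Δ' →
      SubTy (k + Γ.size + Δ.size) m u T T' →
      SubCtx k m u (.snoc Γ Δ T) (.snoc Γ' Δ' T')

/-- Lookup in a context. -/
inductive CtxAt : Ctx → ℕ → Ctx → Ty → Prop
  | here : CtxAt (.snoc Γ Δ T) 0 Δ T
  | there : CtxAt Γ n Δ T → CtxAt (.snoc Γ Δ' T') (n+1) Δ T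

/-- The identity spine `id_γ`, η-expanding every variable of `γ`. -/
def idSpAux : Scope → ℕ → Sp
  | .nil, _ => .nil
  | .snoc γ δ _, i =>
      .snoc (idSpAux γ (i+1)) δ.len (.head (.inl (δ.len + i)) (idSpAux δ 0))

def idSp (γ : Scope) : Sp := idSpAux γ 0

/-! ## Rewriting -/

/-- A rewrite rule `γ ⊩ l ↦ r :: s`. -/
structure Rule : Type where
  γ : Scope
  lhs : Tm
  rhs : Tm
  s : ℕ

/-! The rewriting relation generated by a rewrite system `R`: root steps by
rule instances, closed under congruence. -/
mutual
inductive RedTm (R : Set Rule) : Tm → Tm → Prop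
  | root : r ∈ R → SubTm 0 r.γ.len v r.lhs t → SubTm 0 r.γ.len v r.rhs t' →
      RedTm R t t'
  | congr : RedSp R sp sp' → RedTm R (.head h sp) (.head h sp')
inductive RedSp (R : Set Rule) : Sp → Sp → Prop
  | here : RedTm R t t' → RedSp R (.snoc ts n t) (.snoc ts n t')
  | there : RedSp R ts ts' → RedSp R (.snoc ts n t) (.snoc ts' n t)
end

inductive RedTy (R : Set Rule) : Ty → Ty → Prop
  | mk : RedSp R sp sp' → RedTy R ⟨c, sp⟩ ⟨c, sp'⟩

inductive RedCtx (R : Set Rule) : Ctx → Ctx → Prop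
  | head : RedCtx R Γ Γ' → RedCtx R (.snoc Γ Δ T) (.snoc Γ' Δ T)
  | mid : RedCtx R Δ Δ' → RedCtx R (.snoc Γ Δ T) (.snoc Γ Δ' T)
  | last : RedTy R T T' → RedCtx R (.snoc Γ Δ T) (.snoc Γ Δ T')

/-! Conversion (definitional equality). -/
def ConvTm (R : Set Rule) : Tm → Tm → Prop := Relation.EqvGen (RedTm R)
def ConvSp (R : Set Rule) : Sp → Sp → Prop := Relation.EqvGen (RedSp R)
def ConvTy (R : Set Rule) : Ty → Ty → Prop := Relation.EqvGen (RedTy R)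
def ConvCtx (R : Set Rule) : Ctx → Ctx → Prop := Relation.EqvGen (RedCtx R)

/-- Strong normalization: no infinite rewrite sequence. -/
def SNTm (R : Set Rule) (t : Tm) : Prop := Acc (fun a b => RedTm R b a) t
def SNSp (R : Set Rule) (ts : Sp) : Prop := Acc (fun a b => RedSp R b a) ts
def SNTy (R : Set Rule) (T : Ty) : Prop := SNSp R T.sp

/-- Confluence of a rewrite system. -/
def Confluent (R : Set Rule) : Prop :=
  ∀ a b c, Relation.ReflTransGen (RedTm R) a b → Relation.ReflTransGen (RedTm R) a c →
    ∃ d, Relation.ReflTransGen (RedTm R) b d ∧ Relation.ReflTransGen (RedTm R) c d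

/-- A reduction strategy for `R`: a functional sub-relation of `→*` with the
same normal forms. -/
def GoodStrategy (R : Set Rule) (S : Tm → Tm → Prop) : Prop :=
  (∀ a b, S a b → Relation.ReflTransGen (RedTm R) a b) ∧
  (∀ a, (∀ b, ¬ S a b) ↔ (∀ b, ¬ RedTm R a b)) ∧
  (∀ a b c, S a b → S a c → b = c)

/-! ## Occurrences of constants, H₁ and H₂ -/

mutual
inductive ConstInTm : ℕ → Tm → Prop
  | head : ConstInTm c (.head (.inr c) sp)
  | arg : ConstInSp c sp → ConstInTm c (.head h sp)
inductive ConstInSp : ℕ → Sp → Prop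
  | here : ConstInTm c t → ConstInSp c (.snoc ts n t)
  | there : ConstInSp c ts → ConstInSp c (.snoc ts n t)
end

def ConstInTy (c : ℕ) (T : Ty) : Prop := c = T.c ∨ ConstInSp c T.sp

/-- H₁: no constant occurring in the expression is the head of a rewrite rule. -/
def H1Tm (R : Set Rule) (t : Tm) : Prop :=
  ∀ c, ConstInTm c t → ∀ r ∈ R, ∀ sp, r.lhs ≠ Tm.head (Sum.inr c) sp
def H1Sp (R : Set Rule) (ts : Sp) : Prop :=
  ∀ c, ConstInSp c ts → ∀ r ∈ R, ∀ sp, r.lhs ≠ Tm.head (Sum.inr c) sp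
def H1Ty (R : Set Rule) (T : Ty) : Prop :=
  ∀ c, ConstInTy c T → ∀ r ∈ R, ∀ sp, r.lhs ≠ Tm.head (Sum.inr c) sp

/-! ## Signatures -/

/-- Entries of a signature: `c : Δ_ν → T` (`out = some T`) or `c : Δ_ν → □`
(`out = none`); `ν` is the erasure assignment (`true` = erased `•`). -/
structure SEntry : Type where
  c : ℕ
  Δ : Ctx
  ν : List Bool
  out : Option Ty

abbrev Sig := List SEntry

/-- ν-erasure of a context into a scope, dropping erased entries (the head of
`ν` corresponds to the last entry of the context). -/
def nuErase (csort : ℕ → ℕ) : Ctx → List Bool → Scope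
  | .nil, _ => .nil
  | .snoc _ _ _, [] => .nil
  | .snoc Γ Δ T, b :: ν =>
      if b then nuErase csort Γ ν
      else .snoc (nuErase csort Γ ν) (eraseCtx csort Δ) (csort T.c)

/-- Action of an erasure assignment on a spine, dropping erased arguments. -/
def nuAct : List Bool → Sp → Sp
  | _, .nil => .nil
  | [], .snoc _ _ _ => .nil
  | b :: ν, .snoc ts n t =>
      if b then nuAct ν ts else .snoc (nuAct ν ts) n t

def eraseSEntry (csort : ℕ → ℕ) (e : SEntry) : PEntry :=
  ⟨e.c, nuErase csort e.Δ e.ν, e.out.map (eraseTy csort)⟩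

/-- Erasure of a signature into a pre-signature. -/
def eraseSig (csort : ℕ → ℕ) (Sg : Sig) : PreSig := Sg.map (eraseSEntry csort)

/-- H₂: every constant occurring in the expression has no erased arguments. -/
def NoErasedTm (Sg : Sig) (t : Tm) : Prop :=
  ∀ c, ConstInTm c t → ∀ e ∈ Sg, e.c = c → ∀ b ∈ e.ν, b = false
def NoErasedSp (Sg : Sig) (ts : Sp) : Prop :=
  ∀ c, ConstInSp c ts → ∀ e ∈ Sg, e.c = c → ∀ b ∈ e.ν, b = false
def NoErasedTy (Sg : Sig) (T : Ty) : Prop :=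
  ∀ c, ConstInTy c T → ∀ e ∈ Sg, e.c = c → ∀ b ∈ e.ν, b = false

/-! ## Typing -/

mutual
/-- `Γ ⊢` -/
inductive WfC (Sg : Sig) (R : Set Rule) (csort : ℕ → ℕ) : Ctx → Prop
  | nil : WfC Sg R csort .nil
  | snoc : WfTy Sg R csort (Γ.append Δ) T → WfC Sg R csort (.snoc Γ Δ T)
/-- `Γ ⊢ T` -/
inductive WfTy (Sg : Sig) (R : Set Rule) (csort : ℕ → ℕ) : Ctx → Ty → Prop
  | mk : (⟨c, Δ, ν, none⟩ : SEntry) ∈ Sg → WfSpJ Sg R csort Γ ts Δ →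
      WfTy Sg R csort Γ ⟨c, nuAct ν ts⟩
/-- `Γ ⊢ t : T` -/
inductive WfTmJ (Sg : Sig) (R : Set Rule) (csort : ℕ → ℕ) : Ctx → Tm → Ty → Prop
  | const : (⟨c, Δ, ν, some T⟩ : SEntry) ∈ Sg → WfSpJ Sg R csort Γ ts Δ →
      SubTy 0 Δ.size ts T T' →
      WfTmJ Sg R csort Γ (.head (.inr c) (nuAct ν ts)) T'
  | var : CtxAt Γ x Δ T → WfSpJ Sg R csort Γ ts Δ → SubTy 0 Δ.size ts T T' →
      WfTmJ Sg R csort Γ (.head (.inl x) ts) T'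
  | conv : WfTmJ Sg R csort Γ t T → WfTy Sg R csort Γ U → ConvTy R T U →
      WfTmJ Sg R csort Γ t U
/-- `Γ ⊢ 𝐭 : Δ` -/
inductive WfSpJ (Sg : Sig) (R : Set Rule) (csort : ℕ → ℕ) : Ctx → Sp → Ctx → Prop
  | nil : WfC Sg R csort Γ → WfSpJ Sg R csort Γ .nil .nil
  | snoc : WfSpJ Sg R csort Γ ts Δ → SubCtx 0 Δ.size ts Γ' Γ'' →
      SubTy Γ'.size Δ.size ts T T' → WfTmJ Sg R csort (Γ.append Γ'') t T' →
      WfSpJ Sg R csort Γ (.snoc ts Γ'.size t) (.snoc Δ Γ' T)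
end

/-- Generic judgments `𝒥`. -/
inductive Judg : Type
  | ctx : Judg
  | ty : Ty → Judg
  | tm : Tm → Ty → Judg
  | sp : Sp → Ctx → Judg

def WfJ (Sg : Sig) (R : Set Rule) (csort : ℕ → ℕ) (Γ : Ctx) : Judg → Prop
  | .ctx => WfC Sg R csort Γ
  | .ty T => WfTy Sg R csort Γ T
  | .tm t T => WfTmJ Sg R csort Γ t T
  | .sp ts Δ => WfSpJ Sg R csort Γ ts Δ

def shiftJudg (d k : ℕ) : Judg → Judg
  | .ctx => .ctx
  | .ty T => .ty (shiftTy d k T)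
  | .tm t T => .tm (shiftTm d k t) (shiftTy d k T)
  | .sp ts Δ => .sp (shiftSp d k ts) (shiftCtx d k Δ)

def SubJudg (k m : ℕ) (u : Sp) : Judg → Judg → Prop
  | .ctx, .ctx => True
  | .ty T, .ty T' => SubTy k m u T T'
  | .tm t T, .tm t' T' => SubTm k m u t t' ∧ SubTy k m u T T'
  | .sp ts Δ, .sp ts' Δ' => SubSp k m u ts ts' ∧ SubCtx k m u Δ Δ'
  | _, _ => False

/-- Whether a constant is declared in a signature. -/
def SigDecl (Sg : Sig) (c : ℕ) : Prop := ∃ e ∈ Sg, e.c = c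

/-- Restriction of a rewrite system to the rules mentioning only constants
declared in a (prefix) signature. -/
def restrict (R : Set Rule) (Sg : Sig) : Set Rule :=
  {r | r ∈ R ∧ (∀ c, ConstInTm c r.lhs → SigDecl Sg c) ∧
       (∀ c, ConstInTm c r.rhs → SigDecl Sg c)}

/-- Well-typed theories: each declaration is derivable in the prefix theory. -/
inductive WfSig (R : Set Rule) (csort : ℕ → ℕ) : Sig → Prop
  | nil : WfSig R csort []
  | consTm : WfSig R csort Sg → WfTy Sg (restrict R Sg) csort Δ T →
      ν.length = Δ.size → WfSig R csort (⟨c, Δ, ν, some T⟩ :: Sg)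
  | consTy : WfSig R csort Sg → WfC Sg (restrict R Sg) csort Δ →
      ν.length = Δ.size → WfSig R csort (⟨c, Δ, ν, none⟩ :: Sg)

/-- Subject reduction of a theory. -/
def SubjectRed (Sg : Sig) (R : Set Rule) (csort : ℕ → ℕ) : Prop :=
  ∀ Γ t T t', WfTmJ Sg R csort Γ t T → RedTm R t t' → WfTmJ Sg R csort Γ t' T

/-- Strong normalization of a theory. -/
def TheorySN (Sg : Sig) (R : Set Rule) (csort : ℕ → ℕ) : Prop :=
  ∀ Γ t T, WfTmJ Sg R csort Γ t T → SNTm R t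

/-- Type preservation of the rewrite rules. -/
def TypePreserving (Sg : Sig) (R : Set Rule) (csort : ℕ → ℕ) : Prop :=
  ∀ r ∈ R, ∀ (Γ : Ctx) (v : Sp) (l' r' : Tm) (T : Ty),
    WfSp (eraseSig csort Sg) (eraseCtx csort Γ) v r.γ →
    SubTm 0 r.γ.len v r.lhs l' → SubTm 0 r.γ.len v r.rhs r' →
    WfTmJ Sg R csort Γ l' T → WfTmJ Sg R csort Γ r' T

/-! ## Patterns -/

/-! Fully-applied Miller patterns: `m` is the number of flexible variables and
`γ₀` the rigid scope; a flexible variable (index `≥ γ₀.len`) must be applied to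
the identity spine of the rigid scope. -/
mutual
inductive PatTm (m : ℕ) : Scope → Tm → Prop
  | flex : γ₀.len ≤ x → x < γ₀.len + m →
      PatTm m γ₀ (.head (.inl x) (idSp γ₀))
  | rigid : PatSp m γ₀ sp → PatTm m γ₀ (.head (.inr c) sp)
inductive PatSp (m : ℕ) : Scope → Sp → Prop
  | nil : PatSp m γ₀ .nil
  | snoc : PatSp m γ₀ ts → PatTm m (γ₀.append δ) t →
      PatSp m γ₀ (.snoc ts δ.len t)
end

def PatTy (m : ℕ) (γ₀ : Scope) (T : Ty) : Prop := PatSp m γ₀ T.sp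

/-! Rigid patterns: patterns satisfying H₁ and H₂. -/
def RigidTy (Sg : Sig) (R : Set Rule) (m : ℕ) (γ₀ : Scope) (T : Ty) : Prop :=
  PatTy m γ₀ T ∧ H1Ty R T ∧ NoErasedTy Sg T

/-! ## Substitution of flexible variables (partial maps) -/

/-- A substitution for flexible variables: to a flexible index it may assign a
number of bound variables together with a body. -/
abbrev PSub := ℕ → Option (ℕ × Tm)

/-! Hereditary substitution of a flexible-variable assignment, at rigid depth
`k`. -/
mutual
inductive MSubTm (σ : PSub) : ℕ → Tm → Tm → Prop
  | const : MSubSp σ k sp sp' →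
      MSubTm σ k (.head (.inr c) sp) (.head (.inr c) sp')
  | low : x < k → MSubSp σ k sp sp' →
      MSubTm σ k (.head (.inl x) sp) (.head (.inl x) sp')
  | keep : k ≤ x → σ (x - k) = none → MSubSp σ k sp sp' →
      MSubTm σ k (.head (.inl x) sp) (.head (.inl x) sp')
  | subst : k ≤ x → σ (x - k) = some (n, t) → MSubSp σ k sp sp' →
      SubTm 0 n sp' (shiftTm k n t) r →
      MSubTm σ k (.head (.inl x) sp) r
inductive MSubSp (σ : PSub) : ℕ → Sp → Sp → Prop
  | nil : MSubSp σ k .nil .nil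
  | snoc : MSubSp σ k ts ts' → MSubTm σ (k + n) t t' →
      MSubSp σ k (.snoc ts n t) (.snoc ts' n t')
end

inductive MSubTy (σ : PSub) (k : ℕ) : Ty → Ty → Prop
  | mk : MSubSp σ k sp sp' → MSubTy σ k ⟨c, sp⟩ ⟨c, sp'⟩

/-! Reading back a flexible-variable assignment as a spine for a context. -/
inductive MapToSp : PSub → Ctx → Sp → Prop
  | nil : MapToSp σ .nil .nil
  | snoc : MapToSp (fun n => σ (n+1)) Γ v → σ 0 = some (Δ.size, t) →
      MapToSp σ (.snoc Γ Δ T) (.snoc v Δ.size t)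

/-! ## The matching algorithm -/

/-- `t` has `𝔖`-normal form `n`. -/
def SNF (R : Set Rule) (S : Tm → Tm → Prop) (t n : Tm) : Prop :=
  Relation.ReflTransGen S t n ∧ ∀ u, ¬ RedTm R n u

/-- Merging two flexible assignments, comparing `𝔖`-normal forms on the
duplicated (non-linear) variables. -/
def PMerge (R : Set Rule) (S : Tm → Tm → Prop) (σ₁ σ₂ σ : PSub) : Prop :=
  ∀ x, (σ₁ x = none → σ x = σ₂ x) ∧ (σ₂ x = none → σ x = σ₁ x) ∧
    (∀ n₁ t₁ n₂ t₂, σ₁ x = some (n₁, t₁) → σ₂ x = some (n₂, t₂) →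
      n₁ = n₂ ∧ ∃ v, σ x = some (n₁, v) ∧ SNF R S t₁ v ∧ SNF R S t₂ v)

/-! The matching algorithm `t ≺ u ⇝ σ` (with strategy `S`). -/
mutual
inductive MatchTm (R : Set Rule) (S : Tm → Tm → Prop) : Tm → Tm → PSub → Prop
  | flex : γ₀.len ≤ x →
      MatchTm R S (.head (.inl x) (idSp γ₀)) u
        (fun y => if y = x - γ₀.len then some (γ₀.len, u) else none)
  | rigid : Relation.ReflTransGen S u (.head (.inr c) us) →
      MatchSp R S ts us σ → MatchTm R S (.head (.inr c) ts) u σ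
inductive MatchSp (R : Set Rule) (S : Tm → Tm → Prop) : Sp → Sp → PSub → Prop
  | nil : MatchSp R S .nil .nil (fun _ => none)
  | snoc : MatchSp R S ts us σ₁ → MatchTm R S t u σ₂ → PMerge R S σ₁ σ₂ σ →
      MatchSp R S (.snoc ts n t) (.snoc us n u) σ
end

inductive MatchTy (R : Set Rule) (S : Tm → Tm → Prop) : Ty → Ty → PSub → Prop
  | mk : MatchSp R S ts us σ → MatchTy R S ⟨c, ts⟩ ⟨c, us⟩ σ

/-! Termination domain of the matching algorithm. -/
mutual
inductive DomMTm (R : Set Rule) (S : Tm → Tm → Prop) : Tm → Tm → Prop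
  | flex : DomMTm R S (.head (.inl x) ts) u
  | rigid : SNTm R u →
      (∀ us, Relation.ReflTransGen S u (.head (.inr c) us) → DomMSp R S ts us) →
      DomMTm R S (.head (.inr c) ts) u
inductive DomMSp (R : Set Rule) (S : Tm → Tm → Prop) : Sp → Sp → Prop
  | nilPat : DomMSp R S .nil us
  | nilSub : DomMSp R S ts .nil
  | snoc : DomMSp R S ts us → DomMTm R S t u →
      (∀ σ x n v, MatchSp R S ts us σ → σ x = some (n, v) → SNTm R v) →
      (∀ σ x n v, MatchTm R S t u σ → σ x = some (n, v) → SNTm R v) →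
      DomMSp R S (.snoc ts n' t) (.snoc us n' u)
end

inductive DomMTy (R : Set Rule) (S : Tm → Tm → Prop) : Ty → Ty → Prop
  | mk : (c = c' → DomMSp R S ts us) → DomMTy R S ⟨c, ts⟩ ⟨c', us⟩

/-! ## Moded signatures and theories -/

/-- Entries of a moded signature. -/
inductive MEntry : Type
  | ty : ℕ → Ctx → MEntry
  | inf : ℕ → Ctx → Ty → MEntry
  | chk : ℕ → Ctx → Ctx → Ty → MEntry
  | infS : ℕ → Ctx → Ctx → Ctx → Ty → Ctx → Ty → MEntry

abbrev MSig := List MEntry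

/-- Underlying signature entry of a moded entry. -/
def MEntry.toS : MEntry → SEntry
  | .ty c Δ => ⟨c, Δ, List.replicate Δ.size false, none⟩
  | .inf c Δ T => ⟨c, Δ, List.replicate Δ.size false, some T⟩
  | .chk c Δ' Δ T =>
      ⟨c, Δ'.append Δ,
        List.replicate Δ.size false ++ List.replicate Δ'.size true, some T⟩
  | .infS c Δ₁ Δ' Γx T Δ₂ U =>
      ⟨c, Ctx.append (Ctx.snoc (Δ₁.append Δ') Γx T) Δ₂,
        List.replicate Δ₂.size false ++ [false] ++
          List.replicate Δ'.size true ++ List.replicate Δ₁.size false, some U⟩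

def MSig.toSig (M : MSig) : Sig := M.map MEntry.toS

/-- Well-typed moded theories. -/
inductive WfMSig (R : Set Rule) (csort : ℕ → ℕ) : MSig → Prop
  | nil : WfMSig R csort []
  | ty : WfMSig R csort M →
      WfC (MSig.toSig M) (restrict R (MSig.toSig M)) csort Δ →
      WfMSig R csort (.ty c Δ :: M)
  | inf : WfMSig R csort M →
      WfTy (MSig.toSig M) (restrict R (MSig.toSig M)) csort Δ T →
      WfMSig R csort (.inf c Δ T :: M)
  | chk : WfMSig R csort M →
      WfC (MSig.toSig M) (restrict R (MSig.toSig M)) csort (Δ'.append Δ) →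
      WfTy (MSig.toSig M) (restrict R (MSig.toSig M)) csort Δ' T →
      RigidTy (MSig.toSig M) R Δ'.size .nil T →
      WfMSig R csort (.chk c Δ' Δ T :: M)
  | infS : WfMSig R csort M →
      WfTy (MSig.toSig M) (restrict R (MSig.toSig M)) csort
        (Ctx.append (Ctx.snoc (Δ₁.append Δ') Γx T) Δ₂) U →
      WfC (MSig.toSig M) (restrict R (MSig.toSig M)) csort (Δ₁.append Γx) →
      RigidTy (MSig.toSig M) R Δ'.size (eraseCtx csort Γx) T →
      WfMSig R csort (.infS c Δ₁ Δ' Γx T Δ₂ U :: M)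

/-- `𝔖`-normal-form comparison of two types (per Switch). -/
def NFEqTy (R : Set Rule) (T U : Ty) : Prop :=
  T.c = U.c ∧ ∃ N, Relation.ReflTransGen (RedSp R) T.sp N ∧
    Relation.ReflTransGen (RedSp R) U.sp N ∧ ∀ X, ¬ RedSp R N X

/-! ## The bidirectional typing algorithm -/

mutual
/-- `Γ ⊢ t ⇒ T` -/
inductive Infer (M : MSig) (R : Set Rule) (S : Tm → Tm → Prop) (csort : ℕ → ℕ) :
    Ctx → Tm → Ty → Prop
  | var : CtxAt Γ x Δ T → ChkSp M R S csort Γ ts Δ → SubTy 0 Δ.size ts T T' →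
      Infer M R S csort Γ (.head (.inl x) ts) T'
  | const : MEntry.inf c Δ T ∈ M → ChkSp M R S csort Γ ts Δ →
      SubTy 0 Δ.size ts T T' →
      Infer M R S csort Γ (.head (.inr c) ts) T'
  | constS : MEntry.infS c Δ₁ Δ' Γx T Δ₂ U ∈ M →
      ChkSp M R S csort Γ ts Δ₁ →
      SubCtx 0 Δ₁.size ts Γx Γx' →
      Infer M R S csort (Γ.append Γx') t V →
      MatchTy R S T V σ →
      MapToSp σ Δ' v →
      SubCtx 0 (Δ₁.size + Δ'.size + 1) (Sp.snoc (Sp.append ts v) Γx.size t) Δ₂ Δ₂' →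
      ChkSp M R S csort Γ us Δ₂' →
      SubTy 0 (Δ₁.size + Δ'.size + 1 + Δ₂.size)
        (Sp.append (Sp.snoc (Sp.append ts v) Γx.size t) us) U U' →
      Infer M R S csort Γ (.head (.inr c) (Sp.append (Sp.snoc ts Γx.size t) us)) U'
/-- `Γ ⊢ t ⇐ T` -/
inductive Check (M : MSig) (R : Set Rule) (S : Tm → Tm → Prop) (csort : ℕ → ℕ) :
    Ctx → Tm → Ty → Prop
  | switch : (∀ c sp, t = Tm.head (Sum.inr c) sp →
        ∀ Δ' Δ T', MEntry.chk c Δ' Δ T' ∉ M) →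
      Infer M R S csort Γ t U → NFEqTy R T U → Check M R S csort Γ t T
  | chk : MEntry.chk c Δ' Δ T ∈ M → MatchTy R S T V σ → MapToSp σ Δ' v →
      SubCtx 0 Δ'.size v Δ Δv → ChkSp M R S csort Γ ts Δv →
      Check M R S csort Γ (.head (.inr c) ts) V
/-- `Γ ⊢ T ⇔ □` -/
inductive ChkTy (M : MSig) (R : Set Rule) (S : Tm → Tm → Prop) (csort : ℕ → ℕ) :
    Ctx → Ty → Prop
  | mk : MEntry.ty c Δ ∈ M → ChkSp M R S csort Γ ts Δ →
      ChkTy M R S csort Γ (Ty.mk c ts)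
/-- `Γ ⊢ 𝐭 ⇐ Δ` -/
inductive ChkSp (M : MSig) (R : Set Rule) (S : Tm → Tm → Prop) (csort : ℕ → ℕ) :
    Ctx → Sp → Ctx → Prop
  | nil : ChkSp M R S csort Γ .nil .nil
  | snoc : ChkSp M R S csort Γ ts Δ → SubCtx 0 Δ.size ts Γx Γx' →
      SubTy Γx.size Δ.size ts T T' →
      Check M R S csort (Γ.append Γx') t T' →
      ChkSp M R S csort Γ (.snoc ts Γx.size t) (.snoc Δ Γx T)
end

/-! ## Well-moded terms -/

mutual
/-- Inferable terms `Tm⁺`. -/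
inductive InfTm (M : MSig) : Tm → Prop
  | var : SpWM M ts → InfTm M (.head (.inl x) ts)
  | const : MEntry.inf c Δ T ∈ M → SpWM M ts → Sp.len ts = Δ.size →
      InfTm M (.head (.inr c) ts)
  | constS : MEntry.infS c Δ₁ Δ' Γx T Δ₂ U ∈ M → SpWM M ts →
      Sp.len ts = Δ₁.size → InfTm M t → SpWM M us → Sp.len us = Δ₂.size →
      InfTm M (.head (.inr c) (Sp.append (Sp.snoc ts Γx.size t) us))
/-- Checkable terms `Tm⁻`. -/
inductive ChkTm (M : MSig) : Tm → Prop
  | switch : InfTm M t → ChkTm M t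
  | const : MEntry.chk c Δ' Δ T ∈ M → SpWM M ts → Sp.len ts = Δ.size →
      ChkTm M (.head (.inr c) ts)
/-- Well-moded spines `Sp^{+-}`. -/
inductive SpWM (M : MSig) : Sp → Prop
  | nil : SpWM M .nil
  | snoc : SpWM M ts → ChkTm M t → SpWM M (.snoc ts n t)
end

/-- Well-moded types `Ty^{+-}`. -/
def TyWM (M : MSig) (T : Ty) : Prop :=
  (∃ Δ, MEntry.ty T.c Δ ∈ M) ∧ SpWM M T.sp

/-! ## Termination domain of the bidirectional algorithm -/

mutual
inductive DomInf (M : MSig) (R : Set Rule) (S : Tm → Tm → Prop) (csort : ℕ → ℕ) :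
    Ctx → Tm → Prop
  | var : (∀ Δ T, CtxAt Γ x Δ T → DomChkSp M R S csort Γ ts Δ) →
      DomInf M R S csort Γ (.head (.inl x) ts)
  | const :
      (∀ Δ T, MEntry.inf c Δ T ∈ M → DomChkSp M R S csort Γ ts Δ) →
      (∀ Δ₁ Δ' Γx T Δ₂ U ts₁ t us, MEntry.infS c Δ₁ Δ' Γx T Δ₂ U ∈ M →
        ts = Sp.append (Sp.snoc ts₁ Γx.size t) us →
        DomChkSp M R S csort Γ ts₁ Δ₁) →
      (∀ Δ₁ Δ' Γx T Δ₂ U ts₁ t us, MEntry.infS c Δ₁ Δ' Γx T Δ₂ U ∈ M →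
        ts = Sp.append (Sp.snoc ts₁ Γx.size t) us →
        ∀ Γx', SubCtx 0 Δ₁.size ts₁ Γx Γx' →
          DomInf M R S csort (Γ.append Γx') t) →
      (∀ Δ₁ Δ' Γx T Δ₂ U ts₁ t us, MEntry.infS c Δ₁ Δ' Γx T Δ₂ U ∈ M →
        ts = Sp.append (Sp.snoc ts₁ Γx.size t) us →
        ∀ Γx', SubCtx 0 Δ₁.size ts₁ Γx Γx' →
          ∀ V, Infer M R S csort (Γ.append Γx') t V → DomMTy R S T V) →
      (∀ Δ₁ Δ' Γx T Δ₂ U ts₁ t us, MEntry.infS c Δ₁ Δ' Γx T Δ₂ U ∈ M →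
        ts = Sp.append (Sp.snoc ts₁ Γx.size t) us →
        ∀ Γx', SubCtx 0 Δ₁.size ts₁ Γx Γx' →
          ∀ V σ v Δ₂', Infer M R S csort (Γ.append Γx') t V →
            MatchTy R S T V σ → MapToSp σ Δ' v →
            SubCtx 0 (Δ₁.size + Δ'.size + 1)
              (Sp.snoc (Sp.append ts₁ v) Γx.size t) Δ₂ Δ₂' →
            DomChkSp M R S csort Γ us Δ₂') →
      DomInf M R S csort Γ (.head (.inr c) ts)
inductive DomChk (M : MSig) (R : Set Rule) (S : Tm → Tm → Prop) (csort : ℕ → ℕ) :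
    Ctx → Tm → Ty → Prop
  | mk :
      ((∀ c sp, t = Tm.head (Sum.inr c) sp →
          ∀ Δ' Δ T', MEntry.chk c Δ' Δ T' ∉ M) →
        DomInf M R S csort Γ t) →
      ((∀ c sp, t = Tm.head (Sum.inr c) sp →
          ∀ Δ' Δ T', MEntry.chk c Δ' Δ T' ∉ M) →
        SNSp R T.sp ∧ (∀ U, Infer M R S csort Γ t U → SNSp R U.sp)) →
      (∀ c sp Δ' Δ T', t = Tm.head (Sum.inr c) sp → MEntry.chk c Δ' Δ T' ∈ M →
        DomMTy R S T' T) →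
      (∀ c sp Δ' Δ T', t = Tm.head (Sum.inr c) sp → MEntry.chk c Δ' Δ T' ∈ M →
        ∀ σ v Δv, MatchTy R S T' T σ → MapToSp σ Δ' v →
          SubCtx 0 Δ'.size v Δ Δv → DomChkSp M R S csort Γ sp Δv) →
      DomChk M R S csort Γ t T
inductive DomChkTy (M : MSig) (R : Set Rule) (S : Tm → Tm → Prop) (csort : ℕ → ℕ) :
    Ctx → Ty → Prop
  | mk : (∀ Δ, MEntry.ty c Δ ∈ M → DomChkSp M R S csort Γ ts Δ) →
      DomChkTy M R S csort Γ (Ty.mk c ts)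
inductive DomChkSp (M : MSig) (R : Set Rule) (S : Tm → Tm → Prop) (csort : ℕ → ℕ) :
    Ctx → Sp → Ctx → Prop
  | nilSp : DomChkSp M R S csort Γ .nil Δ
  | nilCtx : DomChkSp M R S csort Γ ts .nil
  | snoc : DomChkSp M R S csort Γ ts Δ →
      (∀ Γx' T', SubCtx 0 Δ.size ts Γx Γx' → SubTy Γx.size Δ.size ts T T' →
        DomChk M R S csort (Γ.append Γx') t T') →
      DomChkSp M R S csort Γ (.snoc ts n t) (.snoc Δ Γx T)
end

end CompLF

namespace CompLF

/-!
On raw syntax hereditary substitution is only a partial relation, so the exchange law is proved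
together with the existence of the two composite substitutions: from `e[𝐭] = a` and `e[𝐮] = b`
we build a common `r` with `a[𝐮] = r` and `b[𝐭[𝐮]] = r`, and determinism does the rest.
The order of the scopes, which is the paper's termination measure, is not visible on raw
syntax; it is replaced by the nesting depth of hereditary expansions, recorded as the first
index of `SubTmD`. The proof is by induction on the sum of the depths of the substitutions,
then on the structure of `e`. A variable of the segment of `𝐭` expands into an argument `t₀` of
`𝐭` instantiated with its spine `𝐬`, and the claim becomes the exchange of `𝐬` and `𝐮` in
`t₀`; a variable of the segment of `𝐮` expands into an argument `u₀` of `𝐮`, and the claim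
becomes the exchange of `𝐭` and the spine in `u₀`, where `𝐭` acts trivially because `u₀` is
weakened past its segment. Both inner exchanges have strictly smaller depth.
-/

mutual
inductive SubTmD : ℕ → ℕ → ℕ → Sp → Tm → Tm → Prop
  | low : x < k → SubSpD d k m u sp sp' →
      SubTmD d k m u (.head (.inl x) sp) (.head (.inl x) sp')
  | high : k + m ≤ x → SubSpD d k m u sp sp' →
      SubTmD d k m u (.head (.inl x) sp) (.head (.inl (x - m)) sp')
  | const : SubSpD d k m u sp sp' →
      SubTmD d k m u (.head (.inr c) sp) (.head (.inr c) sp')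
  | mid : k ≤ x → x < k + m → SpAt u (x - k) n t → SubSpD d k m u sp sp' →
      SubTmD d' 0 n sp' (shiftTm k n t) r → d' < d →
      SubTmD d k m u (.head (.inl x) sp) r
inductive SubSpD : ℕ → ℕ → ℕ → Sp → Sp → Sp → Prop
  | nil : SubSpD d k m u .nil .nil
  | snoc : SubSpD d k m u ts ts' → SubTmD d (k + n) m u t t' →
      SubSpD d k m u (.snoc ts n t) (.snoc ts' n t')
end

mutual
theorem SubTmD.mono {d d₂ k m : ℕ} {u : Sp} {e e' : Tm} (h : SubTmD d k m u e e') (hd : d ≤ d₂) :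
    SubTmD d₂ k m u e e' :=
  match h with
  | .low hx hsp => .low hx (hsp.mono hd)
  | .high hx hsp => .high hx (hsp.mono hd)
  | .const hsp => .const (hsp.mono hd)
  | .mid hx₁ hx₂ hu hsp hin hlt => .mid hx₁ hx₂ hu (hsp.mono hd) hin (hlt.trans_le hd)
theorem SubSpD.mono {d d₂ k m : ℕ} {u ts ts' : Sp} (h : SubSpD d k m u ts ts') (hd : d ≤ d₂) :
    SubSpD d₂ k m u ts ts' :=
  match h with
  | .nil => .nil
  | .snoc hts ht => .snoc (hts.mono hd) (ht.mono hd)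
end

mutual
theorem SubTm.exists_subTmD {k m : ℕ} {u : Sp} {e e' : Tm} :
    SubTm k m u e e' → ∃ d, SubTmD d k m u e e'
  | .low hx hsp => let ⟨d, hd⟩ := hsp.exists_subSpD; ⟨d, .low hx hd⟩
  | .high hx hsp => let ⟨d, hd⟩ := hsp.exists_subSpD; ⟨d, .high hx hd⟩
  | .const hsp => let ⟨d, hd⟩ := hsp.exists_subSpD; ⟨d, .const hd⟩
  | .mid hx₁ hx₂ hu hsp hin =>
      let ⟨d₁, hd₁⟩ := hsp.exists_subSpD
      let ⟨d₂, hd₂⟩ := hin.exists_subTmD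
      ⟨max d₁ (d₂ + 1), .mid hx₁ hx₂ hu (hd₁.mono (le_max_left _ _)) hd₂
        ((Nat.lt_succ_self d₂).trans_le (le_max_right _ _))⟩
theorem SubSp.exists_subSpD {k m : ℕ} {u ts ts' : Sp} :
    SubSp k m u ts ts' → ∃ d, SubSpD d k m u ts ts'
  | .nil => ⟨0, .nil⟩
  | .snoc hts ht =>
      let ⟨d₁, hd₁⟩ := hts.exists_subSpD
      let ⟨d₂, hd₂⟩ := ht.exists_subTmD
      ⟨max d₁ d₂, .snoc (hd₁.mono (le_max_left _ _)) (hd₂.mono (le_max_right _ _))⟩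
end

mutual
theorem SubTmD.subTm {d k m : ℕ} {u : Sp} {e e' : Tm} : SubTmD d k m u e e' → SubTm k m u e e'
  | .low hx hsp => .low hx hsp.subSp
  | .high hx hsp => .high hx hsp.subSp
  | .const hsp => .const hsp.subSp
  | .mid hx₁ hx₂ hu hsp hin _ => .mid hx₁ hx₂ hu hsp.subSp hin.subTm
theorem SubSpD.subSp {d k m : ℕ} {u ts ts' : Sp} : SubSpD d k m u ts ts' → SubSp k m u ts ts'
  | .nil => .nil
  | .snoc hts ht => .snoc hts.subSp ht.subTm
end

theorem SpAt.unique {u : Sp} {j n n' : ℕ} {t t' : Tm} (h : SpAt u j n t) (h' : SpAt u j n' t') :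
    n = n' ∧ t = t' := by
  induction h generalizing n' t' with
  | here => cases h'; exact ⟨rfl, rfl⟩
  | there _ ih => cases h' with | there h' => exact ih h'

mutual
theorem SubTmD.det {d d₂ k m : ℕ} {u : Sp} {e a b : Tm} (h : SubTmD d k m u e a)
    (h₂ : SubTmD d₂ k m u e b) : a = b :=
  match h, h₂ with
  | .low _ hsp, .low _ hsp' => by rw [hsp.det hsp']
  | .low hx _, .high hx' _ | .low hx _, .mid hx' _ _ _ _ _ => by omega
  | .high hx _, .low hx' _ | .high hx _, .mid _ hx' _ _ _ _ => by omega
  | .high _ hsp, .high _ hsp' => by rw [hsp.det hsp']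
  | .const hsp, .const hsp' => by rw [hsp.det hsp']
  | .mid hx _ _ _ _ _, .low hx' _ | .mid _ hx _ _ _ _, .high hx' _ => by omega
  | .mid _ _ hu hsp hin _, .mid _ _ hu' hsp' hin' _ => by
      obtain ⟨rfl, rfl⟩ := hu.unique hu'
      obtain rfl := hsp.det hsp'
      exact hin.det hin'
theorem SubSpD.det {d d₂ k m : ℕ} {u ts a b : Sp} (h : SubSpD d k m u ts a)
    (h₂ : SubSpD d₂ k m u ts b) : a = b :=
  match h, h₂ with
  | .nil, .nil => rfl
  | .snoc hts ht, .snoc hts' ht' => by rw [hts.det hts', ht.det ht']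
end

theorem SubTm.det {k m : ℕ} {u : Sp} {e a b : Tm} (h : SubTm k m u e a) (h₂ : SubTm k m u e b) :
    a = b :=
  let ⟨_, h⟩ := h.exists_subTmD
  let ⟨_, h₂⟩ := h₂.exists_subTmD
  h.det h₂

theorem SubSp.det {k m : ℕ} {u ts a b : Sp} (h : SubSp k m u ts a) (h₂ : SubSp k m u ts b) :
    a = b :=
  let ⟨_, h⟩ := h.exists_subSpD
  let ⟨_, h₂⟩ := h₂.exists_subSpD
  h.det h₂

theorem SpAt.shiftSp {u : Sp} {j n : ℕ} {t : Tm} (h : SpAt u j n t) (d i : ℕ) :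
    SpAt (shiftSp d i u) j n (shiftTm d (i + n) t) := by
  induction h with
  | here => exact .here
  | there _ ih => exact .there ih

theorem SpAt.exists_subSpD {d c j n m : ℕ} {u t t' : Sp} {t₀ : Tm} (h : SpAt t j n t₀)
    (ht : SubSpD d c m u t t') : ∃ t₀', SpAt t' j n t₀' ∧ SubTmD d (c + n) m u t₀ t₀' := by
  induction h generalizing t' with
  | here => cases ht with | snoc _ ht₀ => exact ⟨_, .here, ht₀⟩
  | there _ ih =>
      cases ht with
      | snoc hts _ =>
          obtain ⟨t₀', h', ht₀⟩ := ih hts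
          exact ⟨t₀', .there h', ht₀⟩

mutual
theorem shiftTm_shiftTm : ∀ (e : Tm) (a b j j₂ : ℕ), j ≤ j₂ → j₂ ≤ j + b →
    shiftTm a j₂ (shiftTm b j e) = shiftTm (a + b) j e
  | .head (.inl x) sp, a, b, j, j₂, h₁, h₂ => by
      simp only [shiftTm, shiftSp_shiftSp sp a b j j₂ h₁ h₂]
      congr 2
      split_ifs <;> omega
  | .head (.inr c) sp, a, b, j, j₂, h₁, h₂ => by
      simp only [shiftTm, shiftSp_shiftSp sp a b j j₂ h₁ h₂]
theorem shiftSp_shiftSp : ∀ (sp : Sp) (a b j j₂ : ℕ), j ≤ j₂ → j₂ ≤ j + b →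
    shiftSp a j₂ (shiftSp b j sp) = shiftSp (a + b) j sp
  | .nil, _, _, _, _, _, _ => rfl
  | .snoc ts n t, a, b, j, j₂, h₁, h₂ => by
      simp only [shiftSp, shiftSp_shiftSp ts a b j j₂ h₁ h₂,
        shiftTm_shiftTm t a b (j + n) (j₂ + n) (by omega) (by omega)]
end

mutual
theorem shiftTm_shiftTm_comm : ∀ (e : Tm) (d₁ d₂ j₁ j₂ : ℕ), j₂ ≤ j₁ →
    shiftTm d₁ (j₁ + d₂) (shiftTm d₂ j₂ e) = shiftTm d₂ j₂ (shiftTm d₁ j₁ e)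
  | .head (.inl x) sp, d₁, d₂, j₁, j₂, h => by
      simp only [shiftTm, shiftSp_shiftSp_comm sp d₁ d₂ j₁ j₂ h]
      congr 2
      split_ifs <;> omega
  | .head (.inr c) sp, d₁, d₂, j₁, j₂, h => by
      simp only [shiftTm, shiftSp_shiftSp_comm sp d₁ d₂ j₁ j₂ h]
theorem shiftSp_shiftSp_comm : ∀ (sp : Sp) (d₁ d₂ j₁ j₂ : ℕ), j₂ ≤ j₁ →
    shiftSp d₁ (j₁ + d₂) (shiftSp d₂ j₂ sp) = shiftSp d₂ j₂ (shiftSp d₁ j₁ sp)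
  | .nil, _, _, _, _, _ => rfl
  | .snoc ts n t, d₁, d₂, j₁, j₂, h => by
      simp only [shiftSp, shiftSp_shiftSp_comm ts d₁ d₂ j₁ j₂ h, Nat.add_right_comm j₁ d₂ n,
        shiftTm_shiftTm_comm t d₁ d₂ (j₁ + n) (j₂ + n) (by omega)]
end

mutual
theorem subTmD_shiftTm : ∀ (e : Tm) (j q : ℕ) (v : Sp), SubTmD 0 j q v (shiftTm q j e) e
  | .head (.inl x) sp, j, q, v => by
      rcases Nat.lt_or_ge x j with h | h
      · simpa only [shiftTm, if_pos h] using SubTmD.low h (subSpD_shiftSp sp j q v)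
      · simpa only [shiftTm, if_neg (Nat.not_lt.2 h), Nat.add_sub_cancel] using
          SubTmD.high (u := v) (Nat.add_le_add_right h q) (subSpD_shiftSp sp j q v)
  | .head (.inr c) sp, j, q, v => by
      simpa only [shiftTm] using SubTmD.const (subSpD_shiftSp sp j q v)
theorem subSpD_shiftSp : ∀ (sp : Sp) (j q : ℕ) (v : Sp), SubSpD 0 j q v (shiftSp q j sp) sp
  | .nil, _, _, _ => .nil
  | .snoc ts n t, j, q, v => by
      simpa only [shiftSp] using
        SubSpD.snoc (subSpD_shiftSp ts j q v) (subTmD_shiftTm t (j + n) q v)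
end

mutual
theorem SubTmD.shiftTm_below {d K m : ℕ} {u : Sp} {e e' : Tm} (h : SubTmD d K m u e e')
    (k j : ℕ) (hj : j ≤ K) : SubTmD d (K + k) m u (shiftTm k j e) (shiftTm k j e') :=
  match h with
  | .low (x := x) hx hsp => by
      rcases Nat.lt_or_ge x j with h₁ | h₁
      · simpa only [shiftTm, if_pos h₁] using
          SubTmD.low (by omega) (hsp.shiftSp_below k j hj)
      · simpa only [shiftTm, if_neg (Nat.not_lt.2 h₁)] using
          SubTmD.low (show x + k < K + k by omega) (hsp.shiftSp_below k j hj)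
  | .high (x := x) hx hsp => by
      simpa only [shiftTm, if_neg (show ¬ x < j by omega), if_neg (show ¬ x - m < j by omega),
        show x + k - m = x - m + k by omega] using
        SubTmD.high (u := u) (show K + k + m ≤ x + k by omega) (hsp.shiftSp_below k j hj)
  | .const hsp => by
      simpa only [shiftTm] using SubTmD.const (hsp.shiftSp_below k j hj)
  | .mid (x := x) (n := n) (t := w) hx₁ hx₂ hu hsp hin hlt => by
      have hin' := hin.shiftTm_above k j
      rw [Nat.zero_add, Nat.zero_add,
        shiftTm_shiftTm w k K n (n + j) (by omega) (by omega), Nat.add_comm k K] at hin'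
      simpa only [shiftTm, if_neg (show ¬ x < j by omega)] using
        SubTmD.mid (show K + k ≤ x + k by omega) (show x + k < K + k + m by omega)
          (by rwa [show x + k - (K + k) = x - K by omega]) (hsp.shiftSp_below k j hj) hin' hlt
theorem SubSpD.shiftSp_below {d K m : ℕ} {u ts ts' : Sp} (h : SubSpD d K m u ts ts')
    (k j : ℕ) (hj : j ≤ K) : SubSpD d (K + k) m u (shiftSp k j ts) (shiftSp k j ts') :=
  match h with
  | .nil => .nil
  | .snoc (n := n) hts ht => by
      have ht' := ht.shiftTm_below k (j + n) (by omega)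
      rw [Nat.add_right_comm K n k] at ht'
      simpa only [shiftSp] using SubSpD.snoc (hts.shiftSp_below k j hj) ht'
theorem SubTmD.shiftTm_above {d K m : ℕ} {u : Sp} {e e' : Tm} (h : SubTmD d K m u e e')
    (k j : ℕ) :
    SubTmD d K m (shiftSp k j u) (shiftTm k (K + m + j) e) (shiftTm k (K + j) e') :=
  match h with
  | .low (x := x) hx hsp => by
      simpa only [shiftTm, if_pos (show x < K + m + j by omega),
        if_pos (show x < K + j by omega)] using SubTmD.low hx (hsp.shiftSp_above k j)
  | .high (x := x) hx hsp => by
      rcases Nat.lt_or_ge x (K + m + j) with h₁ | h₁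
      · simpa only [shiftTm, if_pos h₁, if_pos (show x - m < K + j by omega)] using
          SubTmD.high hx (hsp.shiftSp_above k j)
      · simpa only [shiftTm, if_neg (Nat.not_lt.2 h₁), if_neg (show ¬ x - m < K + j by omega),
          show x + k - m = x - m + k by omega] using
          SubTmD.high (show K + m ≤ x + k by omega) (hsp.shiftSp_above k j)
  | .const hsp => by
      simpa only [shiftTm] using SubTmD.const (hsp.shiftSp_above k j)
  | .mid (x := x) (n := n) (t := w) hx₁ hx₂ hu hsp hin hlt => by
      have hin' := hin.shiftTm_above k (K + j)
      rw [Nat.zero_add, Nat.zero_add, show n + (K + j) = n + j + K by omega,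
        shiftTm_shiftTm_comm w k K (n + j) n (by omega), Nat.add_comm n j] at hin'
      simpa only [shiftTm, if_pos (show x < K + m + j by omega)] using
        SubTmD.mid hx₁ hx₂ (hu.shiftSp k j) (hsp.shiftSp_above k j) hin' hlt
theorem SubSpD.shiftSp_above {d K m : ℕ} {u ts ts' : Sp} (h : SubSpD d K m u ts ts')
    (k j : ℕ) :
    SubSpD d K m (shiftSp k j u) (shiftSp k (K + m + j) ts) (shiftSp k (K + j) ts') :=
  match h with
  | .nil => .nil
  | .snoc (n := n) hts ht => by
      have ht' := ht.shiftTm_above k j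
      rw [show K + n + m + j = K + m + j + n by omega,
        show K + n + j = K + j + n by omega] at ht'
      simpa only [shiftSp] using SubSpD.snoc (hts.shiftSp_above k j) ht'
end

/-- The expression lives under `k` binders, then the `q` variables substituted by `t`, then `c`
further variables, then the `m` variables substituted by `u`; the gap `c` lets the spine of an
expanded variable play the role of `t`. -/
def ExchangeTmAt (N : ℕ) (e : Tm) : Prop :=
  ∀ {dh da db c k q m : ℕ} {u t t' : Sp} {a b : Tm},
    SubSpD dh c m u t t' → SubTmD da k q t e a → SubTmD db (k + q + c) m u e b →
    max dh db + da ≤ N → ∃ r, SubTmD (max dh db) (k + c) m u a r ∧ SubTmD da k q t' b r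

def ExchangeSpAt (N : ℕ) (sp : Sp) : Prop :=
  ∀ {dh da db c k q m : ℕ} {u t t' a b : Sp},
    SubSpD dh c m u t t' → SubSpD da k q t sp a → SubSpD db (k + q + c) m u sp b →
    max dh db + da ≤ N → ∃ r, SubSpD (max dh db) (k + c) m u a r ∧ SubSpD da k q t' b r

theorem exchangeSpAt_nil (N : ℕ) : ExchangeSpAt N .nil := by
  intro _ _ _ _ _ _ _ _ _ _ _ _ _ A₁ B₁ _
  cases A₁; cases B₁
  exact ⟨.nil, .nil, .nil⟩

theorem exchangeSpAt_snoc {N n : ℕ} {ts : Sp} {w : Tm} (hts : ExchangeSpAt N ts)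
    (hw : ExchangeTmAt N w) : ExchangeSpAt N (.snoc ts n w) := by
  intro dh da db c k q m u t t' a b ht A₁ B₁ hN
  cases A₁ with | snoc A₁ts A₁w =>
  cases B₁ with | snoc B₁ts B₁w =>
  obtain ⟨s, X, Y⟩ := hts ht A₁ts B₁ts hN
  rw [show k + q + c + n = k + n + q + c by omega] at B₁w
  obtain ⟨r, Xw, Yw⟩ := hw ht A₁w B₁w hN
  rw [Nat.add_right_comm k n c] at Xw
  exact ⟨.snoc s n r, .snoc X Xw, .snoc Y Yw⟩

theorem exchange_var_mem_tSegment {N dh da da' db c k q m n x : ℕ} {u t t' sp₁ sp' s : Sp}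
    {t₀ a : Tm} (IH : ∀ N' < N, ∀ e, ExchangeTmAt N' e) (ht : SubSpD dh c m u t t')
    (hx₁ : k ≤ x) (hx₂ : x < k + q) (hx : SpAt t (x - k) n t₀)
    (ha : SubTmD da' 0 n sp₁ (shiftTm k n t₀) a) (hda : da' < da)
    (X : SubSpD (max dh db) (k + c) m u sp₁ s) (Y : SubSpD da k q t' sp' s)
    (hN : max dh db + da ≤ N) :
    ∃ r, SubTmD (max dh db) (k + c) m u a r ∧ SubTmD da k q t' (.head (.inl x) sp') r := by
  obtain ⟨t₀', hx', ht₀⟩ := hx.exists_subSpD ht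
  have ht₀k := ht₀.shiftTm_below k n (Nat.le_add_left n c)
  rw [show c + n + k = 0 + n + (k + c) by omega] at ht₀k
  obtain ⟨r, X', Y'⟩ := IH _ (by omega) _ X ha ht₀k le_rfl
  rw [show max (max dh db) dh = max dh db by omega, Nat.zero_add] at X'
  exact ⟨r, X', .mid hx₁ hx₂ hx' Y Y' hda⟩

theorem exchange_var_mem_uSegment {N dh da db db' c k q m n x : ℕ} {u t' sp₁ sp' s : Sp}
    {u₀ b : Tm} (IH : ∀ N' < N, ∀ e, ExchangeTmAt N' e)
    (hx₁ : k + q + c ≤ x) (hx₂ : x < k + q + c + m) (hx : SpAt u (x - (k + q + c)) n u₀)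
    (hb : SubTmD db' 0 n sp' (shiftTm (k + q + c) n u₀) b) (hdb : db' < db)
    (X : SubSpD (max dh db) (k + c) m u sp₁ s) (Y : SubSpD da k q t' sp' s)
    (hN : max dh db + da ≤ N) :
    ∃ r, SubTmD (max dh db) (k + c) m u (.head (.inl (x - q)) sp₁) r ∧ SubTmD da k q t' b r := by
  have hu₀ := subTmD_shiftTm (shiftTm (k + c) n u₀) (0 + n + k) q t'
  rw [shiftTm_shiftTm u₀ q (k + c) n (0 + n + k) (by omega) (by omega),
    show q + (k + c) = k + q + c by omega] at hu₀
  obtain ⟨r, X', Y'⟩ := IH _ (by omega) _ Y hb hu₀ le_rfl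
  rw [Nat.max_zero, Nat.zero_add] at X'
  refine ⟨r, .mid (by omega) (by omega) ?_ X Y' (hdb.trans_le (le_max_right _ _)), X'⟩
  rwa [show x - q - (k + c) = x - (k + q + c) by omega]

theorem exchangeTmAt_head {N : ℕ} {sp : Sp} (IH : ∀ N' < N, ∀ e, ExchangeTmAt N' e)
    (hsp : ExchangeSpAt N sp) (h : ℕ ⊕ ℕ) : ExchangeTmAt N (.head h sp) := by
  intro dh da db c k q m u t t' a b ht A₁ B₁ hN
  cases A₁ with
  | const A₁s =>
    cases B₁ with | const B₁s =>
    obtain ⟨s, X, Y⟩ := hsp ht A₁s B₁s hN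
    exact ⟨_, .const X, .const Y⟩
  | low hx A₁s =>
    cases B₁ with
    | low _ B₁s =>
      obtain ⟨s, X, Y⟩ := hsp ht A₁s B₁s hN
      exact ⟨_, .low (by omega) X, .low hx Y⟩
    | high hx' _ | mid hx' _ _ _ _ _ => omega
  | high hx A₁s =>
    cases B₁ with
    | low hx' B₁s =>
      obtain ⟨s, X, Y⟩ := hsp ht A₁s B₁s hN
      exact ⟨_, .low (by omega) X, .high hx Y⟩
    | high hx' B₁s =>
      obtain ⟨s, X, Y⟩ := hsp ht A₁s B₁s hN
      refine ⟨_, .high (by omega) X, ?_⟩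
      rw [← Nat.sub_right_comm]
      exact .high (by omega) Y
    | mid hx₁ hx₂ hu B₁s hb hdb =>
      obtain ⟨s, X, Y⟩ := hsp ht A₁s B₁s hN
      exact exchange_var_mem_uSegment IH hx₁ hx₂ hu hb hdb X Y hN
  | mid hx₁ hx₂ hx A₁s ha hda =>
    cases B₁ with
    | low _ B₁s =>
      obtain ⟨s, X, Y⟩ := hsp ht A₁s B₁s hN
      exact exchange_var_mem_tSegment IH ht hx₁ hx₂ hx ha hda X Y hN
    | high hx' _ | mid _ hx' _ _ _ _ => omega

mutual
theorem exchangeTmAt_of_forall_lt {N : ℕ} (IH : ∀ N' < N, ∀ e, ExchangeTmAt N' e) :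
    ∀ e, ExchangeTmAt N e
  | .head h sp => exchangeTmAt_head IH (exchangeSpAt_of_forall_lt IH sp) h
theorem exchangeSpAt_of_forall_lt {N : ℕ} (IH : ∀ N' < N, ∀ e, ExchangeTmAt N' e) :
    ∀ sp, ExchangeSpAt N sp
  | .nil => exchangeSpAt_nil N
  | .snoc ts _ w =>
    exchangeSpAt_snoc (exchangeSpAt_of_forall_lt IH ts) (exchangeTmAt_of_forall_lt IH w)
end

theorem exchangeTmAt (N : ℕ) : ∀ e, ExchangeTmAt N e := by
  induction N using Nat.strong_induction_on with
  | _ N IH => exact exchangeTmAt_of_forall_lt IH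

theorem exchangeSpAt (N : ℕ) : ∀ sp, ExchangeSpAt N sp :=
  exchangeSpAt_of_forall_lt fun N' _ => exchangeTmAt N'

theorem subTm_exchange {k q m : ℕ} {u t t' : Sp} {e a a' b b' : Tm} (ht : SubSp 0 m u t t')
    (A₁ : SubTm k q t e a) (A₂ : SubTm k m u a a') (B₁ : SubTm (q + k) m u e b)
    (B₂ : SubTm k q t' b b') : a' = b' := by
  rw [Nat.add_comm] at B₁
  obtain ⟨_, ht⟩ := ht.exists_subSpD
  obtain ⟨_, A₁⟩ := A₁.exists_subTmD
  obtain ⟨_, B₁⟩ := B₁.exists_subTmD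
  obtain ⟨r, X, Y⟩ := exchangeTmAt _ e ht A₁ (c := 0) B₁ le_rfl
  exact (A₂.det X.subTm).trans (B₂.det Y.subTm).symm

theorem subSp_exchange {k q m : ℕ} {u t t' e a a' b b' : Sp} (ht : SubSp 0 m u t t')
    (A₁ : SubSp k q t e a) (A₂ : SubSp k m u a a') (B₁ : SubSp (q + k) m u e b)
    (B₂ : SubSp k q t' b b') : a' = b' := by
  rw [Nat.add_comm] at B₁
  obtain ⟨_, ht⟩ := ht.exists_subSpD
  obtain ⟨_, A₁⟩ := A₁.exists_subSpD
  obtain ⟨_, B₁⟩ := B₁.exists_subSpD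
  obtain ⟨r, X, Y⟩ := exchangeSpAt _ e ht A₁ (c := 0) B₁ le_rfl
  exact (A₂.det X.subSp).trans (B₂.det Y.subSp).symm

theorem subTy_exchange {k q m : ℕ} {u t t' : Sp} {e a a' b b' : Ty} (ht : SubSp 0 m u t t')
    (A₁ : SubTy k q t e a) (A₂ : SubTy k m u a a') (B₁ : SubTy (q + k) m u e b)
    (B₂ : SubTy k q t' b b') : a' = b' := by
  obtain ⟨A₁⟩ := A₁
  obtain ⟨A₂⟩ := A₂
  obtain ⟨B₁⟩ := B₁
  obtain ⟨B₂⟩ := B₂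
  rw [subSp_exchange ht A₁ A₂ B₁ B₂]

theorem SubCtx.size_eq {k m : ℕ} {u : Sp} {Γ Γ' : Ctx} (h : SubCtx k m u Γ Γ') :
    Γ'.size = Γ.size := by
  induction h with
  | nil => rfl
  | snoc _ _ _ ih => simp only [Ctx.size, ih]

theorem subCtx_exchange {k q m : ℕ} {u t t' : Sp} {e a a' b b' : Ctx} (ht : SubSp 0 m u t t')
    (A₁ : SubCtx k q t e a) (A₂ : SubCtx k m u a a') (B₁ : SubCtx (q + k) m u e b)
    (B₂ : SubCtx k q t' b b') : a' = b' := by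
  induction A₁ generalizing a' b b' with
  | nil => cases A₂; cases B₁; cases B₂; rfl
  | @snoc k q t Γ _ Δ _ _ _ A₁Γ A₁Δ A₁T ihΓ ihΔ =>
    cases A₂ with | snoc A₂Γ A₂Δ A₂T =>
    cases B₁ with | snoc B₁Γ B₁Δ B₁T =>
    cases B₂ with | snoc B₂Γ B₂Δ B₂T =>
    rw [A₁Γ.size_eq] at A₂Δ A₂T
    rw [A₁Δ.size_eq] at A₂T
    rw [B₁Γ.size_eq] at B₂Δ B₂T
    rw [B₁Δ.size_eq] at B₂T
    rw [Nat.add_assoc] at B₁Δ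
    rw [show q + k + Γ.size + Δ.size = q + (k + Γ.size + Δ.size) by omega] at B₁T
    rw [ihΓ ht A₂Γ B₁Γ B₂Γ, ihΔ ht A₂Δ B₁Δ B₂Δ, subTy_exchange ht A₁T A₂T B₁T B₂T]

/-- **Exchange of substitutions**:
`e[𝐭/γ₃][𝐮/γ₂] = e[𝐮/γ₂][𝐭[𝐮/γ₂]/γ₃]` for `𝐮 ∈ Sp γ₁ γ₂`,
`𝐭 ∈ Sp γ₁.γ₂ γ₃` and `e ∈ Expr γ₁.γ₂.γ₃.γ₄` (stated for all four kinds of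
expressions). -/
theorem subst_exchange (γ₂ γ₃ γ₄ : Scope) (u t t' : Sp)
    (ht' : SubSp 0 γ₂.len u t t') :
    (∀ (e a a' b b' : Tm),
      SubTm γ₄.len γ₃.len t e a → SubTm γ₄.len γ₂.len u a a' →
      SubTm (γ₃.len + γ₄.len) γ₂.len u e b → SubTm γ₄.len γ₃.len t' b b' →
      a' = b') ∧
    (∀ (e a a' b b' : Sp),
      SubSp γ₄.len γ₃.len t e a → SubSp γ₄.len γ₂.len u a a' →
      SubSp (γ₃.len + γ₄.len) γ₂.len u e b → SubSp γ₄.len γ₃.len t' b b' →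
      a' = b') ∧
    (∀ (e a a' b b' : Ty),
      SubTy γ₄.len γ₃.len t e a → SubTy γ₄.len γ₂.len u a a' →
      SubTy (γ₃.len + γ₄.len) γ₂.len u e b → SubTy γ₄.len γ₃.len t' b b' →
      a' = b') ∧
    (∀ (e a a' b b' : Ctx),
      SubCtx γ₄.len γ₃.len t e a → SubCtx γ₄.len γ₂.len u a a' →
      SubCtx (γ₃.len + γ₄.len) γ₂.len u e b → SubCtx γ₄.len γ₃.len t' b b' →
      a' = b') :=
  ⟨fun _ _ _ _ _ => subTm_exchange ht', fun _ _ _ _ _ => subSp_exchange ht',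
    fun _ _ _ _ _ => subTy_exchange ht', fun _ _ _ _ _ => subCtx_exchange ht'⟩

end CompLF
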